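/- Let I=⟨A,A?,R,R?⟩ be an incomplete argumentation framework, S⊆A∪A? a set of arguments, j a verification status, w an argument with w∉A∪A?, and I_att=⟨A∪A?∪{w}, ∅, R, R?∪{(w,a) | a∈A?}⟩. Then for every uncertain argument e∈A?: e∈RE⁺(I,S,j) if and only if (w,e)∈RE⁻(I_att,S∪{w},j), and e∈RE⁻(I,S,j) if and only if (w,e)∈RE⁺(I_att,S∪{w},j). -/
import Mathlib


universe u

/-- An abstract argumentation framework: a set of arguments with an attack relation. -/
structure AF (α : Type u) where
  args : Set α
  att : Set (α × α)

namespace AF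

variable {α : Type u}

/-- `S⁺_F`: arguments attacked by `S`. -/
def plusSet (F : AF α) (S : Set α) : Set α := {a | a ∈ F.args ∧ ∃ b ∈ S, (b, a) ∈ F.att}

/-- `S⁻_F`: arguments attacking `S`. -/
def minusSet (F : AF α) (S : Set α) : Set α := {a | a ∈ F.args ∧ ∃ b ∈ S, (a, b) ∈ F.att}

/-- `S` is conflict-free in `F`. -/
def confFree (F : AF α) (S : Set α) : Prop := S ∩ F.plusSet S = ∅

/-- `S` defends `a` in `F`: every attacker of `a` is attacked by `S`. -/
def defends (F : AF α) (S : Set α) (a : α) : Prop := ∀ b, (b, a) ∈ F.att → b ∈ F.plusSet S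

/-- The characteristic function `Γ_F(S)`: arguments defended by `S`. -/
def Γ (F : AF α) (S : Set α) : Set α := {a | a ∈ F.args ∧ F.defends S a}

/-- Admissible: conflict-free and self-defending. -/
def isAd (F : AF α) (S : Set α) : Prop := S ⊆ F.args ∧ F.confFree S ∧ S ⊆ F.Γ S

/-- Stable: conflict-free and attacking exactly the outside. -/
def isSt (F : AF α) (S : Set α) : Prop := S ⊆ F.args ∧ F.confFree S ∧ F.plusSet S = F.args \ S

/-- Complete: admissible and containing all defended arguments. -/
def isCo (F : AF α) (S : Set α) : Prop := F.isAd S ∧ F.Γ S ⊆ S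

/-- Grounded: ⊆-minimal complete. -/
def isGr (F : AF α) (S : Set α) : Prop := F.isCo S ∧ ∀ T, F.isCo T → T ⊆ S → T = S

/-- Preferred: ⊆-maximal admissible. -/
def isPr (F : AF α) (S : Set α) : Prop := F.isAd S ∧ ∀ T, F.isAd T → S ⊆ T → S = T

end AF

/-- The five common semantics. -/
inductive Sem : Type
  | ad | st | co | gr | pr
deriving DecidableEq

/-- `S` is a `σ`-extension of `F`. -/
def extOf {α : Type u} : Sem → AF α → Set α → Prop
  | .ad => AF.isAd
  | .st => AF.isSt
  | .co => AF.isCo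
  | .gr => AF.isGr
  | .pr => AF.isPr

/-- An incomplete argumentation framework (data part). -/
structure IAF (α : Type u) where
  A : Set α
  Aq : Set α
  R : Set (α × α)
  Rq : Set (α × α)

namespace IAF

variable {α : Type u}

/-- Well-formedness: `A`,`A?` disjoint; `R`,`R?` disjoint subsets of `(A∪A?)×(A∪A?)`. -/
def WF (I : IAF α) : Prop :=
  Disjoint I.A I.Aq ∧ Disjoint I.R I.Rq ∧
  I.R ⊆ (I.A ∪ I.Aq) ×ˢ (I.A ∪ I.Aq) ∧
  I.Rq ⊆ (I.A ∪ I.Aq) ×ˢ (I.A ∪ I.Aq)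

/-- `cert(I)`: the AF projected on the certain part. -/
def cert (I : IAF α) : AF α := ⟨I.A, I.R ∩ I.A ×ˢ I.A⟩

/-- `I'` is a partial completion of `I`. -/
def PartOf (I' I : IAF α) : Prop :=
  I'.WF ∧ I.A ⊆ I'.A ∧ I'.A ⊆ I.A ∪ I.Aq ∧
  I.R ∩ (I'.A ∪ I'.Aq) ×ˢ (I'.A ∪ I'.Aq) ⊆ I'.R ∧
  I'.R ⊆ I.R ∪ I.Rq ∧ I'.Aq ⊆ I.Aq ∧ I'.Rq ⊆ I.Rq

/-- `F` is a completion of `I`. -/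
def IsCompletion (I : IAF α) (F : AF α) : Prop := ∃ I' : IAF α, I'.PartOf I ∧ F = I'.cert

/-- `I + R₀` for a set of uncertain attacks. -/
def addR (I : IAF α) (R0 : Set (α × α)) : IAF α := ⟨I.A, I.Aq, I.R ∪ R0, I.Rq \ R0⟩

/-- `I − R₀` for a set of uncertain attacks. -/
def subR (I : IAF α) (R0 : Set (α × α)) : IAF α := ⟨I.A, I.Aq, I.R, I.Rq \ R0⟩

/-- `I + A₀` for a set of uncertain arguments. -/
def addA (I : IAF α) (A0 : Set α) : IAF α := ⟨I.A ∪ A0, I.Aq \ A0, I.R, I.Rq⟩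

/-- `I − A₀` for a set of uncertain arguments. -/
def subA (I : IAF α) (A0 : Set α) : IAF α :=
  ⟨I.A, I.Aq \ A0,
   I.R \ {p | p ∈ I.R ∪ I.Rq ∧ (p.1 ∈ A0 ∨ p.2 ∈ A0)},
   I.Rq \ {p | p ∈ I.R ∪ I.Rq ∧ (p.1 ∈ A0 ∨ p.2 ∈ A0)}⟩

/-- `S⁺_I`. -/
def plusI (I : IAF α) (S : Set α) : Set α := {a | a ∈ I.A ∪ I.Aq ∧ ∃ b ∈ S, (b, a) ∈ I.R}

/-- `S⁻_I`. -/
def minusI (I : IAF α) (S : Set α) : Set α := {a | a ∈ I.A ∪ I.Aq ∧ ∃ b ∈ S, (a, b) ∈ I.R}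

/-- `S^∼_I`. -/
def simI (I : IAF α) (S : Set α) : Set α :=
  {a | a ∈ I.A ∪ I.Aq ∧ ∀ b ∈ S, (b, a) ∉ I.R ∪ I.Rq}

end IAF

/-- An element of an IAF: either an argument or an attack. -/
inductive Elem (α : Type u) : Type u
  | arg (a : α)
  | att (r : α × α)

/-- `e` is an uncertain element of `I`, i.e. `e ∈ A? ∪ R?`. -/
def IAF.isUnc {α : Type u} (I : IAF α) : Elem α → Prop
  | .arg a => a ∈ I.Aq
  | .att r => r ∈ I.Rq

/-- `I + {e}`. -/
def IAF.addE {α : Type u} (I : IAF α) : Elem α → IAF α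
  | .arg a => I.addA {a}
  | .att r => I.addR {r}

/-- `I − {e}`. -/
def IAF.subE {α : Type u} (I : IAF α) : Elem α → IAF α
  | .arg a => I.subA {a}
  | .att r => I.subR {r}

/-- `e` is the unique uncertain element of `I`, i.e. `A? ∪ R? = {e}`. -/
def onlyUnc {α : Type u} (I : IAF α) : Elem α → Prop
  | .arg a => I.Aq = {a} ∧ I.Rq = ∅
  | .att r => I.Aq = ∅ ∧ I.Rq = {r}

/-- A verification status: a semantics together with true/false. -/
abbrev VStatus := Sem × Bool

/-- `S` has verification status `j` in the AF `F`. -/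
def hasStatus {α : Type u} (F : AF α) (S : Set α) (j : VStatus) : Prop :=
  cond j.2 (extOf j.1 F S) (¬ extOf j.1 F S)

/-- `S` is stable-`j` w.r.t. `I`. -/
def IAF.stableJ {α : Type u} (I : IAF α) (S : Set α) (j : VStatus) : Prop :=
  ∀ F, I.IsCompletion F → hasStatus F S j

/-- `S` is stable-`σ` w.r.t. `I`. -/
def IAF.stableSem {α : Type u} (I : IAF α) (S : Set α) (σ : Sem) : Prop :=
  I.stableJ S (σ, true) ∨ I.stableJ S (σ, false)

/-- `RE⁺(I,S,j)`: uncertain elements whose addition is `j`-relevant for `S` w.r.t. `I`. -/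
def REplus {α : Type u} (I : IAF α) (S : Set α) (j : VStatus) : Set (Elem α) :=
  {e | I.isUnc e ∧ ∃ I' : IAF α, I'.PartOf I ∧ onlyUnc I' e ∧
    hasStatus (I'.addE e).cert S j ∧ ¬ hasStatus (I'.subE e).cert S j}

/-- `RE⁻(I,S,j)`: uncertain elements whose removal is `j`-relevant for `S` w.r.t. `I`. -/
def REminus {α : Type u} (I : IAF α) (S : Set α) (j : VStatus) : Set (Elem α) :=
  {e | I.isUnc e ∧ ∃ I' : IAF α, I'.PartOf I ∧ onlyUnc I' e ∧
    hasStatus (I'.subE e).cert S j ∧ ¬ hasStatus (I'.addE e).cert S j}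

/-- `e` is `σ`-irrelevant for `S` w.r.t. `I`. -/
def irrelevant {α : Type u} (I : IAF α) (S : Set α) (σ : Sem) (e : Elem α) : Prop :=
  e ∉ REplus I S (σ, true) ∧ e ∉ REminus I S (σ, true) ∧
  e ∉ REplus I S (σ, false) ∧ e ∉ REminus I S (σ, false)

/-- `PosVer_σ(I,S) = true`. -/
def PosVer {α : Type u} (σ : Sem) (I : IAF α) (S : Set α) : Prop :=
  ∃ F, I.IsCompletion F ∧ extOf σ F S

/-- `NecVer_σ(I,S) = true`. -/
def NecVer {α : Type u} (σ : Sem) (I : IAF α) (S : Set α) : Prop :=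
  ∀ F, I.IsCompletion F → extOf σ F S

/-- `SRE⁺(I,S,j)`: uncertain elements whose addition is strongly `j`-relevant. -/
def SREplus {α : Type u} (I : IAF α) (S : Set α) (j : VStatus) : Set (Elem α) :=
  {e | I.isUnc e ∧ ∀ I' : IAF α, I'.PartOf (I.subE e) → ¬ I'.stableJ S j}

/-- `SRE⁻(I,S,j)`: uncertain elements whose removal is strongly `j`-relevant. -/
def SREminus {α : Type u} (I : IAF α) (S : Set α) (j : VStatus) : Set (Elem α) :=
  {e | I.isUnc e ∧ ∀ I' : IAF α, I'.PartOf (I.addE e) → ¬ I'.stableJ S j}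

/-- The `OutRel(I,S,(a,b))` predicate. -/
def OutRel {α : Type u} (I : IAF α) (S : Set α) (r : α × α) : Prop :=
  (I.minusI {r.2} \ {r.1}) ∩ I.simI S = ∅ ∧
  PosVer Sem.co
    ((I.addR {p | p ∈ I.Rq ∧ p.1 ∈ S ∧ p.2 ∈ I.minusI {r.2} \ {r.1}}).subR
      {p | p ∈ I.Rq ∧ p.1 ≠ r.1 ∧ p.2 = r.2}) S


namespace Stmt2Proof

universe v
variable {α : Type u}

/-- Hypotheses for the translation lemma. -/
structure Core (B D : Set α) (w : α) (F F' : AF α) : Prop where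
  dBD : ∀ a ∈ B, a ∉ D
  wB : w ∉ B
  wD : w ∉ D
  Fa : F.args = B
  Fatt : ∀ p ∈ F.att, p.1 ∈ B ∧ p.2 ∈ B
  F'a : F'.args = B ∪ D ∪ {w}
  att_of : ∀ p ∈ F'.att, (p.1 ∈ B ∪ D ∧ p.2 ∈ B ∪ D) ∨ (p.1 = w ∧ p.2 ∈ D)
  att_BB : ∀ p : α × α, p.1 ∈ B → p.2 ∈ B → (p ∈ F'.att ↔ p ∈ F.att)
  wD_att : ∀ a ∈ D, (w, a) ∈ F'.att

namespace Core

variable {B D : Set α} {w : α} {F F' : AF α} {S : Set α}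

lemma no_to_w (h : Core B D w F F') (b : α) : (b, w) ∉ F'.att := by
  intro hb
  rcases h.att_of _ hb with ⟨_, hw2⟩ | ⟨_, hw2⟩
  · rcases hw2 with hw2 | hw2
    · exact h.wB hw2
    · exact h.wD hw2
  · exact h.wD hw2

lemma from_w (h : Core B D w F F') {a : α} (ha : (w, a) ∈ F'.att) : a ∈ D := by
  rcases h.att_of _ ha with ⟨hw1, _⟩ | ⟨_, h2⟩
  · rcases hw1 with hw1 | hw1
    · exact absurd hw1 h.wB
    · exact absurd hw1 h.wD
  · exact h2

lemma att_sub (h : Core B D w F F') {p : α × α} (hp : p ∈ F.att) : p ∈ F'.att := by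
  obtain ⟨h1, h2⟩ := h.Fatt p hp
  exact (h.att_BB p h1 h2).2 hp

lemma wA' (h : Core B D w F F') : w ∈ F'.args := by
  rw [h.F'a]; exact Or.inr rfl

/-- extract `S ⊆ B` from the primed side. -/
lemma S_sub_B (h : Core B D w F F') (hwS : w ∉ S)
    (hsub : S ∪ {w} ⊆ F'.args) (hcf : F'.confFree (S ∪ {w})) : S ⊆ B := by
  intro a ha
  have haA : a ∈ B ∪ D ∪ {w} := h.F'a ▸ hsub (Or.inl ha)
  have haD : a ∉ D := by
    intro hD
    have : a ∈ (S ∪ {w}) ∩ F'.plusSet (S ∪ {w}) :=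
      ⟨Or.inl ha, hsub (Or.inl ha), w, Or.inr rfl, h.wD_att a hD⟩
    rw [hcf] at this
    exact this
  rcases haA with (hB | hD) | hww
  · exact hB
  · exact absurd hD haD
  · exact absurd (Set.eq_of_mem_singleton hww ▸ ha) hwS

lemma ad_iff (h : Core B D w F F') (hwS : w ∉ S) :
    F.isAd S ↔ F'.isAd (S ∪ {w}) := by
  constructor
  · rintro ⟨hSB, hcf, hdef⟩
    rw [h.Fa] at hSB
    refine ⟨?_, ?_, ?_⟩
    · rintro a (ha | ha)
      · rw [h.F'a]; exact Or.inl (Or.inl (hSB ha))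
      · rw [h.F'a]; exact Or.inr ha
    · rw [AF.confFree, Set.eq_empty_iff_forall_notMem]
      rintro a ⟨haS, -, b, hbS, hba⟩
      rcases haS with haS | haS
      · rcases hbS with hbS | hbS
        · have : (b, a) ∈ F.att := (h.att_BB (b, a) (hSB hbS) (hSB haS)).1 hba
          have : a ∈ S ∩ F.plusSet S := ⟨haS, h.Fa ▸ hSB haS, b, hbS, this⟩
          rw [hcf] at this; exact this
        · have : a ∈ D := h.from_w (by rwa [Set.eq_of_mem_singleton hbS] at hba)
          exact h.dBD a (hSB haS) this
      · exact h.no_to_w b (by rwa [Set.eq_of_mem_singleton haS] at hba)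
    · rintro a (haS | haS)
      · refine ⟨by rw [h.F'a]; exact Or.inl (Or.inl (hSB haS)), ?_⟩
        intro b hba
        rcases h.att_of _ hba with ⟨hb, -⟩ | ⟨-, haD⟩
        · rcases hb with hb | hb
          · have hFatt : (b, a) ∈ F.att := (h.att_BB (b, a) hb (hSB haS)).1 hba
            obtain ⟨-, hd⟩ := hdef haS
            obtain ⟨-, c, hcS, hcb⟩ := hd b hFatt
            exact ⟨by rw [h.F'a]; exact Or.inl (Or.inl hb), c, Or.inl hcS, h.att_sub hcb⟩
          · exact ⟨by rw [h.F'a]; exact Or.inl (Or.inr hb), w, Or.inr rfl, h.wD_att b hb⟩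
        · exact absurd haD (h.dBD a (hSB haS))
      · rw [Set.eq_of_mem_singleton haS]
        exact ⟨h.wA', fun b hbw => absurd hbw (h.no_to_w b)⟩
  · rintro ⟨hSB', hcf', hdef'⟩
    have hSB : S ⊆ B := h.S_sub_B hwS hSB' hcf'
    refine ⟨by rw [h.Fa]; exact hSB, ?_, ?_⟩
    · rw [AF.confFree, Set.eq_empty_iff_forall_notMem]
      rintro a ⟨haS, -, b, hbS, hba⟩
      have : a ∈ (S ∪ {w}) ∩ F'.plusSet (S ∪ {w}) :=
        ⟨Or.inl haS, hSB' (Or.inl haS), b, Or.inl hbS, h.att_sub hba⟩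
      rw [hcf'] at this; exact this
    · intro a haS
      refine ⟨h.Fa ▸ hSB haS, ?_⟩
      intro b hba
      have hbB : b ∈ B := (h.Fatt _ hba).1
      obtain ⟨-, hd⟩ := hdef' (Or.inl haS)
      obtain ⟨-, c, hcS, hcb⟩ := hd b (h.att_sub hba)
      rcases hcS with hcS | hcS
      · exact ⟨h.Fa ▸ hbB, c, hcS, (h.att_BB (c, b) (hSB hcS) hbB).1 hcb⟩
      · exact absurd (h.from_w (by rwa [Set.eq_of_mem_singleton hcS] at hcb)) (h.dBD b hbB)

lemma co_iff (h : Core B D w F F') (hwS : w ∉ S) :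
    F.isCo S ↔ F'.isCo (S ∪ {w}) := by
  constructor
  · rintro ⟨had, hΓ⟩
    have hSB : S ⊆ B := h.Fa ▸ had.1
    refine ⟨(h.ad_iff hwS).1 had, ?_⟩
    rintro a ⟨haA, hadef⟩
    rw [h.F'a] at haA
    rcases haA with (haB | haD) | haw
    · -- a ∈ B: show a ∈ Γ_F S ⊆ S
      refine Or.inl (hΓ ⟨h.Fa ▸ haB, ?_⟩)
      intro b hba
      have hbB : b ∈ B := (h.Fatt _ hba).1
      obtain ⟨-, c, hcS, hcb⟩ := hadef b (h.att_sub hba)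
      rcases hcS with hcS | hcS
      · exact ⟨h.Fa ▸ hbB, c, hcS, (h.att_BB (c, b) (hSB hcS) hbB).1 hcb⟩
      · exact absurd (h.from_w (by rwa [Set.eq_of_mem_singleton hcS] at hcb)) (h.dBD b hbB)
    · -- a ∈ D: impossible, attacked by w, w undefendable
      obtain ⟨-, c, -, hcw⟩ := hadef w (h.wD_att a haD)
      exact absurd hcw (h.no_to_w c)
    · exact Or.inr haw
  · rintro ⟨had', hΓ'⟩
    have had : F.isAd S := (h.ad_iff hwS).2 had'
    have hSB : S ⊆ B := h.Fa ▸ had.1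
    refine ⟨had, ?_⟩
    rintro a ⟨haA, hadef⟩
    have haB : a ∈ B := h.Fa ▸ haA
    have : a ∈ F'.Γ (S ∪ {w}) := by
      refine ⟨by rw [h.F'a]; exact Or.inl (Or.inl haB), ?_⟩
      intro b hba
      rcases h.att_of _ hba with ⟨hb, -⟩ | ⟨-, haD⟩
      · rcases hb with hb | hb
        · obtain ⟨-, c, hcS, hcb⟩ := hadef b ((h.att_BB (b, a) hb haB).1 hba)
          exact ⟨by rw [h.F'a]; exact Or.inl (Or.inl hb), c, Or.inl hcS, h.att_sub hcb⟩
        · exact ⟨by rw [h.F'a]; exact Or.inl (Or.inr hb), w, Or.inr rfl, h.wD_att b hb⟩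
      · exact absurd haD (h.dBD a haB)
    rcases hΓ' this with haS | haw
    · exact haS
    · exact absurd (Set.eq_of_mem_singleton haw) (fun he => h.wB (he ▸ haB))

lemma st_iff (h : Core B D w F F') (hwS : w ∉ S) :
    F.isSt S ↔ F'.isSt (S ∪ {w}) := by
  constructor
  · rintro ⟨hSB, hcf, hplus⟩
    have hSB' : S ⊆ B := h.Fa ▸ hSB
    have had_cf : F'.confFree (S ∪ {w}) := by
      rw [AF.confFree, Set.eq_empty_iff_forall_notMem]
      rintro a ⟨haS, -, b, hbS, hba⟩
      rcases haS with haS | haS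
      · rcases hbS with hbS | hbS
        · have : (b, a) ∈ F.att := (h.att_BB (b, a) (hSB' hbS) (hSB' haS)).1 hba
          have : a ∈ S ∩ F.plusSet S := ⟨haS, h.Fa ▸ hSB' haS, b, hbS, this⟩
          rw [hcf] at this; exact this
        · exact h.dBD a (hSB' haS) (h.from_w (by rwa [Set.eq_of_mem_singleton hbS] at hba))
      · exact h.no_to_w b (by rwa [Set.eq_of_mem_singleton haS] at hba)
    refine ⟨?_, had_cf, ?_⟩
    · rintro a (ha | ha)
      · rw [h.F'a]; exact Or.inl (Or.inl (hSB' ha))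
      · rw [h.F'a]; exact Or.inr ha
    · ext a
      constructor
      · rintro ⟨haA, b, hbS, hba⟩
        rw [h.F'a] at haA
        constructor
        · rw [h.F'a]; exact haA
        · rintro (haS | haw)
          · have : a ∈ (S ∪ {w}) ∩ F'.plusSet (S ∪ {w}) :=
              ⟨Or.inl haS, by rw [h.F'a]; exact haA, b, hbS, hba⟩
            rw [had_cf] at this; exact this
          · exact h.no_to_w b (by rwa [Set.eq_of_mem_singleton haw] at hba)
      · rintro ⟨haA, haS⟩
        rw [h.F'a] at haA
        rcases haA with (haB | haD) | haw
        · -- a ∈ B \ S: use F stability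
          have : a ∈ F.plusSet S := by
            rw [hplus]
            exact ⟨h.Fa ▸ haB, fun hS => haS (Or.inl hS)⟩
          obtain ⟨-, b, hbS, hba⟩ := this
          exact ⟨by rw [h.F'a]; exact Or.inl (Or.inl haB), b, Or.inl hbS, h.att_sub hba⟩
        · exact ⟨by rw [h.F'a]; exact Or.inl (Or.inr haD), w, Or.inr rfl, h.wD_att a haD⟩
        · exact absurd (Or.inr haw) haS
  · rintro ⟨hSB', hcf', hplus'⟩
    have hSB : S ⊆ B := h.S_sub_B hwS hSB' hcf'
    refine ⟨h.Fa ▸ hSB, ?_, ?_⟩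
    · rw [AF.confFree, Set.eq_empty_iff_forall_notMem]
      rintro a ⟨haS, -, b, hbS, hba⟩
      have : a ∈ (S ∪ {w}) ∩ F'.plusSet (S ∪ {w}) :=
        ⟨Or.inl haS, hSB' (Or.inl haS), b, Or.inl hbS, h.att_sub hba⟩
      rw [hcf'] at this; exact this
    · ext a
      constructor
      · rintro ⟨haA, b, hbS, hba⟩
        have haB : a ∈ B := h.Fa ▸ haA
        refine ⟨haA, fun haS => ?_⟩
        have : a ∈ F'.plusSet (S ∪ {w}) :=
          ⟨by rw [h.F'a]; exact Or.inl (Or.inl haB), b, Or.inl hbS, h.att_sub hba⟩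
        rw [hplus'] at this
        exact this.2 (Or.inl haS)
      · rintro ⟨haA, haS⟩
        have haB : a ∈ B := h.Fa ▸ haA
        have : a ∈ F'.plusSet (S ∪ {w}) := by
          rw [hplus']
          refine ⟨by rw [h.F'a]; exact Or.inl (Or.inl haB), ?_⟩
          rintro (hS | hww)
          · exact haS hS
          · exact h.wB (Set.eq_of_mem_singleton hww ▸ haB)
        obtain ⟨-, b, hbS, hba⟩ := this
        rcases hbS with hbS | hbS
        · exact ⟨haA, b, hbS, (h.att_BB (b, a) (hSB hbS) haB).1 hba⟩
        · exact absurd (h.from_w (by rwa [Set.eq_of_mem_singleton hbS] at hba)) (h.dBD a haB)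

/-- Any complete extension of `F'` contains `w`. -/
lemma w_mem_co (h : Core B D w F F') {T : Set α} (hT : F'.isCo T) : w ∈ T :=
  hT.2 ⟨h.wA', fun b hbw => absurd hbw (h.no_to_w b)⟩

lemma gr_iff (h : Core B D w F F') (hwS : w ∉ S) :
    F.isGr S ↔ F'.isGr (S ∪ {w}) := by
  constructor
  · rintro ⟨hco, hmin⟩
    refine ⟨(h.co_iff hwS).1 hco, ?_⟩
    intro T hTco hTsub
    have hwT : w ∈ T := h.w_mem_co hTco
    have hT' : T = (T \ {w}) ∪ {w} := by
      ext a; by_cases haw : a = w <;> simp [haw, hwT]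
    have hTco' : F.isCo (T \ {w}) := by
      refine (h.co_iff (by simp)).2 ?_
      rwa [← hT']
    have hsub : T \ {w} ⊆ S := by
      rintro a ⟨haT, haw⟩
      rcases hTsub haT with haS | haww
      · exact haS
      · exact absurd haww haw
    have := hmin _ hTco' hsub
    rw [hT', this]
  · rintro ⟨hco', hmin'⟩
    have hco : F.isCo S := (h.co_iff hwS).2 hco'
    refine ⟨hco, ?_⟩
    intro T hTco hTsub
    have hwT : w ∉ T := fun hT => h.wB (h.Fa ▸ hTco.1.1 hT)
    have hTco' : F'.isCo (T ∪ {w}) := (h.co_iff hwT).1 hTco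
    have := hmin' _ hTco' (Set.union_subset_union_left _ hTsub)
    ext a
    constructor
    · exact fun ha => hTsub ha
    · intro ha
      have h2 : a ∈ T ∪ {w} := by rw [this]; exact Or.inl ha
      rcases h2 with h1 | h1
      · exact h1
      · exact absurd (Set.eq_of_mem_singleton h1 ▸ ha) hwS

lemma pr_iff (h : Core B D w F F') (hwS : w ∉ S) :
    F.isPr S ↔ F'.isPr (S ∪ {w}) := by
  constructor
  · rintro ⟨had, hmax⟩
    refine ⟨(h.ad_iff hwS).1 had, ?_⟩
    intro T hTad hTsub
    have hwT : w ∈ T := hTsub (Or.inr rfl)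
    have hT' : T = (T \ {w}) ∪ {w} := by
      ext a; by_cases haw : a = w <;> simp [haw, hwT]
    have hTad' : F.isAd (T \ {w}) := by
      refine (h.ad_iff (by simp)).2 ?_
      rwa [← hT']
    have hsub : S ⊆ T \ {w} := by
      intro a ha
      exact ⟨hTsub (Or.inl ha), fun haw => hwS (Set.eq_of_mem_singleton haw ▸ ha)⟩
    have := hmax _ hTad' hsub
    rw [hT', ← this]
  · rintro ⟨had', hmax'⟩
    have had : F.isAd S := (h.ad_iff hwS).2 had'
    refine ⟨had, ?_⟩
    intro T hTad hTsub
    have hwT : w ∉ T := fun hT => h.wB (h.Fa ▸ hTad.1 hT)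
    have hTad' : F'.isAd (T ∪ {w}) := (h.ad_iff hwT).1 hTad
    have := hmax' _ hTad' (Set.union_subset_union_left _ hTsub)
    ext a
    constructor
    · intro ha
      have h2 : a ∈ T ∪ {w} := by rw [← this]; exact Or.inl ha
      rcases h2 with h1 | h1
      · exact h1
      · exact absurd (Set.eq_of_mem_singleton h1 ▸ ha) hwS
    · intro ha
      have h2 : a ∈ S ∪ {w} := by rw [this]; exact Or.inl ha
      rcases h2 with h1 | h1
      · exact h1
      · exact absurd (Set.eq_of_mem_singleton h1 ▸ ha) hwT

lemma ext_iff (h : Core B D w F F') (hwS : w ∉ S) (σ : Sem) :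
    extOf σ F S ↔ extOf σ F' (S ∪ {w}) := by
  cases σ
  · exact h.ad_iff hwS
  · exact h.st_iff hwS
  · exact h.co_iff hwS
  · exact h.gr_iff hwS
  · exact h.pr_iff hwS

lemma status_iff (h : Core B D w F F') (hwS : w ∉ S) (j : VStatus) :
    hasStatus F S j ↔ hasStatus F' (S ∪ {w}) j := by
  obtain ⟨σ, b⟩ := j
  cases b
  · simpa [hasStatus] using not_congr (h.ext_iff hwS σ)
  · simpa [hasStatus] using h.ext_iff hwS σ

end Core

lemma dir1 (I : IAF α) (w e : α) (S : Set α) (hWF : I.WF) (hw : w ∉ I.A ∪ I.Aq)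
    (he : e ∈ I.Aq) (hwS : w ∉ S)
    (I' : IAF α) (hP : I'.PartOf I) (hO : onlyUnc I' (Elem.arg e)) :
    ∃ I'' : IAF α,
      I''.PartOf ⟨I.A ∪ I.Aq ∪ {w}, ∅, I.R, I.Rq ∪ {p | ∃ a ∈ I.Aq, p = (w, a)}⟩ ∧
      onlyUnc I'' (Elem.att (w, e)) ∧
      (∀ j, hasStatus (I'.addE (Elem.arg e)).cert S j ↔
        hasStatus (I''.subE (Elem.att (w, e))).cert (S ∪ {w}) j) ∧
      (∀ j, hasStatus (I'.subE (Elem.arg e)).cert S j ↔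
        hasStatus (I''.addE (Elem.att (w, e))).cert (S ∪ {w}) j) := by
  obtain ⟨hdA, hdR, hRsq, hRqsq⟩ := hWF
  obtain ⟨hWF', hAA', hA'A, hRR', hR'R, hAq', hRq'⟩ := hP
  obtain ⟨hAq'e, hRq'e⟩ := hO
  obtain ⟨hdA', hdR', hR'sq, hRq'sq⟩ := hWF'
  -- basic facts
  have heA : e ∉ I.A := fun h => (Set.disjoint_left.1 hdA h) he
  have heA' : e ∉ I'.A := fun h => (Set.disjoint_left.1 hdA' h) (hAq'e ▸ rfl)
  have hwA' : w ∉ I'.A := fun h => hw (hA'A h)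
  have hwe : w ≠ e := fun h => hw (Or.inr (h ▸ he))
  have hR'B : I'.R ⊆ (I'.A ∪ {e}) ×ˢ (I'.A ∪ {e}) := by
    intro p hp
    have := hR'sq hp
    rwa [hAq'e] at this
  -- the constructed IAF
  set R'' : Set (α × α) :=
    I'.R ∪ I.R ∪ {p | ∃ a ∈ I.Aq \ (I'.A ∪ {e}), p = (w, a)} with hR''
  refine ⟨⟨I.A ∪ I.Aq ∪ {w}, ∅, R'', {(w, e)}⟩, ?_, ⟨rfl, rfl⟩, ?_, ?_⟩
  · -- PartOf Iatt
    have hweR'' : (w, e) ∉ R'' := by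
      rintro ((h | h) | h)
      · exact hwA' ((Set.mem_prod.1 (hR'B h)).1.resolve_right (fun hh => hwe (Set.eq_of_mem_singleton hh)))
      · have := (Set.mem_prod.1 (hRsq h)).1
        exact hw this
      · obtain ⟨a, ha, hpa⟩ := h
        injection hpa with h1 h2
        exact ha.2 (Or.inr (Set.mem_singleton_iff.2 h2.symm))
    have hR''sub : R'' ⊆ (I.A ∪ I.Aq ∪ {w} ∪ ∅) ×ˢ (I.A ∪ I.Aq ∪ {w} ∪ ∅) := by
      rintro p ((h | h) | h)
      · have := Set.mem_prod.1 (hR'B h)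
        refine Set.mem_prod.2 ⟨?_, ?_⟩
        · rcases this.1 with h1 | h1
          · exact Or.inl (Or.inl (hA'A h1))
          · exact Or.inl (Or.inl (Or.inr (Set.eq_of_mem_singleton h1 ▸ he)))
        · rcases this.2 with h1 | h1
          · exact Or.inl (Or.inl (hA'A h1))
          · exact Or.inl (Or.inl (Or.inr (Set.eq_of_mem_singleton h1 ▸ he)))
      · have := Set.mem_prod.1 (hRsq h)
        exact Set.mem_prod.2 ⟨Or.inl (Or.inl this.1), Or.inl (Or.inl this.2)⟩
      · obtain ⟨a, ha, rfl⟩ := h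
        exact Set.mem_prod.2 ⟨Or.inl (Or.inr rfl), Or.inl (Or.inl (Or.inr ha.1))⟩
    refine ⟨⟨?_, ?_, ?_, ?_⟩, ?_, ?_, ?_, ?_, ?_, ?_⟩
    · simp
    · rw [Set.disjoint_right]
      intro p hp
      rw [Set.eq_of_mem_singleton hp]
      exact hweR''
    · exact hR''sub
    · rintro p hp
      rw [Set.eq_of_mem_singleton hp]
      exact Set.mem_prod.2 ⟨Or.inl (Or.inr rfl), Or.inl (Or.inl (Or.inr he))⟩
    · exact fun a h => h
    · exact fun a h => Or.inl h
    · intro p hp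
      exact Or.inl (Or.inr hp.1)
    · rintro p ((h | h) | h)
      · rcases hR'R h with h1 | h1
        · exact Or.inl h1
        · exact Or.inr (Or.inl h1)
      · exact Or.inl h
      · obtain ⟨a, ha, rfl⟩ := h
        exact Or.inr (Or.inr ⟨a, ha.1, rfl⟩)
    · exact fun a h => h
    · rintro p hp
      rw [Set.eq_of_mem_singleton hp]
      exact Or.inr ⟨e, he, rfl⟩
  · -- case: e added ↔ (w,e) removed
    intro j
    have hBD : I'.A ∪ {e} ∪ (I.Aq \ (I'.A ∪ {e})) = I.A ∪ I.Aq := by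
      ext a
      constructor
      · rintro ((h | h) | h)
        · exact hA'A h
        · exact Or.inr (Set.eq_of_mem_singleton h ▸ he)
        · exact Or.inr h.1
      · rintro (h | h)
        · exact Or.inl (Or.inl (hAA' h))
        · by_cases h1 : a ∈ I'.A ∪ {e}
          · exact Or.inl h1
          · exact Or.inr ⟨h, h1⟩
    have hcore : Core (I'.A ∪ {e}) (I.Aq \ (I'.A ∪ {e})) w
        (I'.addE (Elem.arg e)).cert
        (((⟨I.A ∪ I.Aq ∪ {w}, ∅, R'', {(w, e)}⟩ : IAF α)).subE (Elem.att (w, e))).cert := by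
      constructor
      · exact fun a ha hd => hd.2 ha
      · rintro (h | h)
        · exact hwA' h
        · exact hwe (Set.eq_of_mem_singleton h)
      · exact fun h => hw (Or.inr h.1)
      · rfl
      · intro p hp
        exact Set.mem_prod.1 hp.2
      · show I.A ∪ I.Aq ∪ {w} = _
        rw [hBD]
      · rintro p ⟨((h | h) | h), hp2⟩
        · exact Or.inl ⟨Or.inl (Set.mem_prod.1 (hR'B h)).1, Or.inl (Set.mem_prod.1 (hR'B h)).2⟩
        · have := Set.mem_prod.1 (hRsq h)
          rw [← hBD] at this
          exact Or.inl this
        · obtain ⟨a, ha, rfl⟩ := h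
          exact Or.inr ⟨rfl, ha⟩
      · intro p h1 h2
        constructor
        · rintro ⟨((h | h) | h), -⟩
          · exact ⟨h, Set.mem_prod.2 ⟨h1, h2⟩⟩
          · refine ⟨hRR' ?_, Set.mem_prod.2 ⟨h1, h2⟩⟩
            rw [hAq'e]
            exact ⟨h, Set.mem_prod.2 ⟨h1, h2⟩⟩
          · obtain ⟨a, ha, rfl⟩ := h
            rcases h1 with hh | hh
            · exact absurd hh hwA'
            · exact absurd (Set.eq_of_mem_singleton hh) hwe
        · rintro ⟨hpR, -⟩
          refine ⟨Or.inl (Or.inl hpR), Set.mem_prod.2 ⟨?_, ?_⟩⟩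
          · rcases h1 with hh | hh
            · exact Or.inl (hA'A hh)
            · exact Or.inl (Or.inr (Set.eq_of_mem_singleton hh ▸ he))
          · rcases h2 with hh | hh
            · exact Or.inl (hA'A hh)
            · exact Or.inl (Or.inr (Set.eq_of_mem_singleton hh ▸ he))
      · intro a ha
        exact ⟨Or.inr ⟨a, ha, rfl⟩, Set.mem_prod.2 ⟨Or.inr rfl, Or.inl (Or.inr ha.1)⟩⟩
    exact hcore.status_iff hwS j
  · -- case: e removed ↔ (w,e) added
    intro j
    have hBD : I'.A ∪ (I.Aq \ I'.A) = I.A ∪ I.Aq := by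
      ext a
      constructor
      · rintro (h | h)
        · exact hA'A h
        · exact Or.inr h.1
      · rintro (h | h)
        · exact Or.inl (hAA' h)
        · by_cases h1 : a ∈ I'.A
          · exact Or.inl h1
          · exact Or.inr ⟨h, h1⟩
    have hcore : Core I'.A (I.Aq \ I'.A) w
        (I'.subE (Elem.arg e)).cert
        (((⟨I.A ∪ I.Aq ∪ {w}, ∅, R'', {(w, e)}⟩ : IAF α)).addE (Elem.att (w, e))).cert := by
      constructor
      · exact fun a ha hd => hd.2 ha
      · exact hwA'
      · exact fun h => hw (Or.inr h.1)
      · rfl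
      · intro p hp
        exact Set.mem_prod.1 hp.2
      · show I.A ∪ I.Aq ∪ {w} = _
        rw [hBD]
      · rintro p ⟨(((h | h) | h) | h), hp2⟩
        · refine Or.inl ⟨?_, ?_⟩
          · rcases (Set.mem_prod.1 (hR'B h)).1 with hh | hh
            · exact Or.inl hh
            · exact Or.inr ⟨Set.eq_of_mem_singleton hh ▸ he, Set.eq_of_mem_singleton hh ▸ heA'⟩
          · rcases (Set.mem_prod.1 (hR'B h)).2 with hh | hh
            · exact Or.inl hh
            · exact Or.inr ⟨Set.eq_of_mem_singleton hh ▸ he, Set.eq_of_mem_singleton hh ▸ heA'⟩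
        · have := Set.mem_prod.1 (hRsq h)
          rw [← hBD] at this
          exact Or.inl this
        · obtain ⟨a, ha, rfl⟩ := h
          exact Or.inr ⟨rfl, ha.1, fun hh => ha.2 (Or.inl hh)⟩
        · rw [Set.eq_of_mem_singleton h]
          exact Or.inr ⟨rfl, he, heA'⟩
      · intro p h1 h2
        constructor
        · rintro ⟨(((h | h) | h) | h), -⟩
          · refine ⟨⟨h, ?_⟩, Set.mem_prod.2 ⟨h1, h2⟩⟩
            rintro ⟨-, (hh | hh)⟩
            · exact heA' (Set.eq_of_mem_singleton hh ▸ h1)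
            · exact heA' (Set.eq_of_mem_singleton hh ▸ h2)
          · have hpR' : p ∈ I'.R := by
              apply hRR'
              rw [hAq'e]
              exact ⟨h, Set.mem_prod.2 ⟨Or.inl h1, Or.inl h2⟩⟩
            refine ⟨⟨hpR', ?_⟩, Set.mem_prod.2 ⟨h1, h2⟩⟩
            rintro ⟨-, (hh | hh)⟩
            · exact heA' (Set.eq_of_mem_singleton hh ▸ h1)
            · exact heA' (Set.eq_of_mem_singleton hh ▸ h2)
          · obtain ⟨a, ha, rfl⟩ := h
            exact absurd h1 hwA'
          · rw [Set.eq_of_mem_singleton h] at h1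
            exact absurd h1 hwA'
        · rintro ⟨⟨hpR, -⟩, -⟩
          exact ⟨Or.inl (Or.inl (Or.inl hpR)),
            Set.mem_prod.2 ⟨Or.inl (hA'A h1), Or.inl (hA'A h2)⟩⟩
      · intro a ha
        by_cases hae : a = e
        · subst hae
          exact ⟨Or.inr rfl, Set.mem_prod.2 ⟨Or.inr rfl, Or.inl (Or.inr ha.1)⟩⟩
        · refine ⟨Or.inl (Or.inr ⟨a, ⟨ha.1, ?_⟩, rfl⟩),
            Set.mem_prod.2 ⟨Or.inr rfl, Or.inl (Or.inr ha.1)⟩⟩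
          rintro (hh | hh)
          · exact ha.2 hh
          · exact hae (Set.eq_of_mem_singleton hh)
    exact hcore.status_iff hwS j


lemma dir2 (I : IAF α) (w e : α) (S : Set α) (hWF : I.WF) (hw : w ∉ I.A ∪ I.Aq)
    (he : e ∈ I.Aq) (hwS : w ∉ S)
    (I'' : IAF α)
    (hP : I''.PartOf ⟨I.A ∪ I.Aq ∪ {w}, ∅, I.R, I.Rq ∪ {p | ∃ a ∈ I.Aq, p = (w, a)}⟩)
    (hO : onlyUnc I'' (Elem.att (w, e))) :
    ∃ I' : IAF α, I'.PartOf I ∧ onlyUnc I' (Elem.arg e) ∧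
      (∀ j, hasStatus (I'.addE (Elem.arg e)).cert S j ↔
        hasStatus (I''.subE (Elem.att (w, e))).cert (S ∪ {w}) j) ∧
      (∀ j, hasStatus (I'.subE (Elem.arg e)).cert S j ↔
        hasStatus (I''.addE (Elem.att (w, e))).cert (S ∪ {w}) j) := by
  obtain ⟨hdA, hdR, hRsq, hRqsq⟩ := hWF
  obtain ⟨hWF'', hAA'', hA''A, hRR'', hR''R, hAq'', hRq''⟩ := hP
  obtain ⟨hAq''e, hRq''e⟩ := hO
  obtain ⟨hdA'', hdR'', hR''sq, hRq''sq⟩ := hWF''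
  have heA : e ∉ I.A := fun h => (Set.disjoint_left.1 hdA h) he
  have hA'' : I''.A = I.A ∪ I.Aq ∪ {w} := by
    refine Set.Subset.antisymm ?_ hAA''
    intro a ha
    have := hA''A ha
    simpa using this
  have hAAqA'' : I.A ∪ I.Aq ⊆ I''.A := fun a ha => hAA'' (Or.inl ha)
  have hRsubR'' : I.R ⊆ I''.R := by
    intro p hp
    refine hRR'' ⟨hp, ?_⟩
    have := hRsq hp
    exact Set.mem_prod.2 ⟨Or.inl (hAAqA'' (Set.mem_prod.1 this).1),
      Or.inl (hAAqA'' (Set.mem_prod.1 this).2)⟩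
  have hweR'' : (w, e) ∉ I''.R := by
    intro h
    exact (Set.disjoint_left.1 hdR'' h) (hRq''e ▸ rfl)
  have hwaR'' : ∀ a, (w, a) ∈ I''.R → a ∈ I.Aq ∧ a ≠ e := by
    intro a ha
    rcases hR''R ha with h | h | h
    · exact absurd (Set.mem_prod.1 (hRsq h)).1 hw
    · exact absurd (Set.mem_prod.1 (hRqsq h)).1 hw
    · obtain ⟨b, hb, heq⟩ := h
      injection heq with h1 h2
      subst h2
      exact ⟨hb, fun hae => hweR'' (hae ▸ ha)⟩
  -- the constructed partial completion of I
  set A' : Set α := I.A ∪ {a | a ∈ I.Aq ∧ a ≠ e ∧ (w, a) ∉ I''.R} with hA'def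
  have heA' : e ∉ A' := by
    rintro (h | h)
    · exact heA h
    · exact h.2.1 rfl
  have hwA' : w ∉ A' := by
    rintro (h | h)
    · exact hw (Or.inl h)
    · exact hw (Or.inr h.1)
  have hA'AAq : A' ⊆ I.A ∪ I.Aq := by
    rintro a (h | h)
    · exact Or.inl h
    · exact Or.inr h.1
  have hmem : ∀ x, x ∈ I.A ∪ I.Aq ∪ {w} → x ∈ I''.A := fun x hx => by rw [hA'']; exact hx
  have hwB : w ∉ A' ∪ ({e} : Set α) := by
    rintro (h | h)
    · exact hwA' h
    · exact hw (Or.inr (Set.eq_of_mem_singleton h ▸ he))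
  refine ⟨⟨A', {e}, I''.R ∩ (A' ∪ {e}) ×ˢ (A' ∪ {e}), ∅⟩, ?_, ⟨rfl, rfl⟩, ?_, ?_⟩
  · -- PartOf I
    refine ⟨⟨?_, ?_, ?_, ?_⟩, ?_, ?_, ?_, ?_, ?_, ?_⟩
    · rw [Set.disjoint_right]
      intro a ha
      rw [Set.eq_of_mem_singleton ha]
      exact heA'
    · simp
    · exact fun p hp => hp.2
    · simp
    · exact fun a h => Or.inl h
    · exact hA'AAq
    · exact fun p hp => ⟨hRsubR'' hp.1, hp.2⟩
    · rintro p ⟨hp, hpr⟩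
      rcases hR''R hp with h | h | h
      · exact Or.inl h
      · exact Or.inr h
      · obtain ⟨b, hb, rfl⟩ := h
        exact absurd (Set.mem_prod.1 hpr).1 hwB
    · exact Set.singleton_subset_iff.2 he
    · exact Set.empty_subset _
  · -- case: e added ↔ (w,e) removed
    intro j
    have hBD : A' ∪ {e} ∪ (I.Aq \ (A' ∪ {e})) = I.A ∪ I.Aq := by
      ext a
      constructor
      · rintro ((h | h) | h)
        · exact hA'AAq h
        · exact Or.inr (Set.eq_of_mem_singleton h ▸ he)
        · exact Or.inr h.1
      · rintro (h | h)
        · exact Or.inl (Or.inl (Or.inl h))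
        · by_cases h1 : a ∈ A' ∪ ({e} : Set α)
          · exact Or.inl h1
          · exact Or.inr ⟨h, h1⟩
    have hDmem : ∀ a ∈ I.Aq \ (A' ∪ ({e} : Set α)), (w, a) ∈ I''.R := by
      rintro a ⟨ha, hna⟩
      by_contra hc
      exact hna (Or.inl (Or.inr ⟨ha, fun hae => hna (Or.inr (Set.mem_singleton_iff.2 hae)), hc⟩))
    have hcore : Core (A' ∪ {e}) (I.Aq \ (A' ∪ {e})) w
        ((⟨A', {e}, I''.R ∩ (A' ∪ {e}) ×ˢ (A' ∪ {e}), ∅⟩ : IAF α).addE (Elem.arg e)).cert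
        ((I''.subE (Elem.att (w, e))).cert) := by
      constructor
      · exact fun a ha hd => hd.2 ha
      · exact hwB
      · exact fun h => hw (Or.inr h.1)
      · rfl
      · intro p hp
        exact Set.mem_prod.1 hp.2
      · show I''.A = _
        rw [hA'', hBD]
      · rintro p ⟨hp, -⟩
        rcases hR''R hp with h | h | h
        · have := Set.mem_prod.1 (hRsq h)
          rw [← hBD] at this
          exact Or.inl this
        · have := Set.mem_prod.1 (hRqsq h)
          rw [← hBD] at this
          exact Or.inl this
        · obtain ⟨b, hb, rfl⟩ := h
          obtain ⟨hbq, hbe⟩ := hwaR'' b hp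
          refine Or.inr ⟨rfl, hbq, ?_⟩
          rintro (hh | hh)
          · rcases hh with hh | hh
            · exact (Set.disjoint_left.1 hdA hh) hbq
            · exact hh.2.2 hp
          · exact hbe (Set.eq_of_mem_singleton hh)
      · intro p h1 h2
        constructor
        · rintro ⟨hp, -⟩
          exact ⟨⟨hp, Set.mem_prod.2 ⟨h1, h2⟩⟩, Set.mem_prod.2 ⟨h1, h2⟩⟩
        · rintro ⟨⟨hp, -⟩, -⟩
          refine ⟨hp, Set.mem_prod.2 ⟨?_, ?_⟩⟩
          · rcases h1 with hh | hh
            · exact hmem _ (Or.inl (hA'AAq hh))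
            · exact hmem _ (Or.inl (Or.inr (Set.eq_of_mem_singleton hh ▸ he)))
          · rcases h2 with hh | hh
            · exact hmem _ (Or.inl (hA'AAq hh))
            · exact hmem _ (Or.inl (Or.inr (Set.eq_of_mem_singleton hh ▸ he)))
      · intro a ha
        exact ⟨hDmem a ha, Set.mem_prod.2 ⟨hmem _ (Or.inr rfl), hmem _ (Or.inl (Or.inr ha.1))⟩⟩
    exact hcore.status_iff hwS j
  · -- case: e removed ↔ (w,e) added
    intro j
    have hBD : A' ∪ (I.Aq \ A') = I.A ∪ I.Aq := by
      ext a
      constructor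
      · rintro (h | h)
        · exact hA'AAq h
        · exact Or.inr h.1
      · rintro (h | h)
        · exact Or.inl (Or.inl h)
        · by_cases h1 : a ∈ A'
          · exact Or.inl h1
          · exact Or.inr ⟨h, h1⟩
    have hDmem : ∀ a ∈ I.Aq \ A', a ≠ e → (w, a) ∈ I''.R := by
      rintro a ⟨ha, hna⟩ hae
      by_contra hc
      exact hna (Or.inr ⟨ha, hae, hc⟩)
    have hcore : Core A' (I.Aq \ A') w
        ((⟨A', {e}, I''.R ∩ (A' ∪ {e}) ×ˢ (A' ∪ {e}), ∅⟩ : IAF α).subE (Elem.arg e)).cert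
        ((I''.addE (Elem.att (w, e))).cert) := by
      constructor
      · exact fun a ha hd => hd.2 ha
      · exact hwA'
      · exact fun h => hw (Or.inr h.1)
      · rfl
      · intro p hp
        exact Set.mem_prod.1 hp.2
      · show I''.A = _
        rw [hA'', hBD]
      · rintro p ⟨(hp | hp), -⟩
        · rcases hR''R hp with h | h | h
          · have := Set.mem_prod.1 (hRsq h)
            rw [← hBD] at this
            exact Or.inl this
          · have := Set.mem_prod.1 (hRqsq h)
            rw [← hBD] at this
            exact Or.inl this
          · obtain ⟨b, hb, rfl⟩ := h
            obtain ⟨hbq, hbe⟩ := hwaR'' b hp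
            refine Or.inr ⟨rfl, hbq, ?_⟩
            rintro (hh | hh)
            · exact (Set.disjoint_left.1 hdA hh) hbq
            · exact hh.2.2 hp
        · rw [Set.eq_of_mem_singleton hp]
          exact Or.inr ⟨rfl, he, heA'⟩
      · intro p h1 h2
        constructor
        · rintro ⟨(hp | hp), -⟩
          · refine ⟨⟨⟨hp, Set.mem_prod.2 ⟨Or.inl h1, Or.inl h2⟩⟩, ?_⟩,
              Set.mem_prod.2 ⟨h1, h2⟩⟩
            rintro ⟨-, (hh | hh)⟩
            · exact heA' (Set.eq_of_mem_singleton hh ▸ h1)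
            · exact heA' (Set.eq_of_mem_singleton hh ▸ h2)
          · rw [Set.eq_of_mem_singleton hp] at h1
            exact absurd h1 hwA'
        · rintro ⟨⟨⟨hp, -⟩, -⟩, -⟩
          exact ⟨Or.inl hp,
            Set.mem_prod.2 ⟨hmem _ (Or.inl (hA'AAq h1)), hmem _ (Or.inl (hA'AAq h2))⟩⟩
      · intro a ha
        by_cases hae : a = e
        · subst hae
          exact ⟨Or.inr rfl,
            Set.mem_prod.2 ⟨hmem _ (Or.inr rfl), hmem _ (Or.inl (Or.inr he))⟩⟩
        · exact ⟨Or.inl (hDmem a ha hae),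
            Set.mem_prod.2 ⟨hmem _ (Or.inr rfl), hmem _ (Or.inl (Or.inr ha.1))⟩⟩
    exact hcore.status_iff hwS j

end Stmt2Proof

/-- reduction to an AtIAF: uncertain arguments correspond to attacks from `w`. -/
theorem stmt2 {α : Type u} (I : IAF α) (S : Set α) (j : VStatus) (w : α)
    (hWF : I.WF) (hS : S ⊆ I.A ∪ I.Aq) (hw : w ∉ I.A ∪ I.Aq)
    (Iatt : IAF α)
    (hIatt : Iatt = ⟨I.A ∪ I.Aq ∪ {w}, ∅, I.R, I.Rq ∪ {p | ∃ a ∈ I.Aq, p = (w, a)}⟩) :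
    ∀ e ∈ I.Aq,
      (Elem.arg e ∈ REplus I S j ↔ Elem.att (w, e) ∈ REminus Iatt (S ∪ {w}) j) ∧
      (Elem.arg e ∈ REminus I S j ↔ Elem.att (w, e) ∈ REplus Iatt (S ∪ {w}) j) := by
  subst hIatt
  intro e he
  have hwS : w ∉ S := fun h => hw (hS h)
  have hunc : (w, e) ∈ I.Rq ∪ {p | ∃ a ∈ I.Aq, p = (w, a)} := Or.inr ⟨e, he, rfl⟩
  constructor
  · constructor
    · rintro ⟨-, I', hP, hO, h1, h2⟩
      obtain ⟨I'', hP'', hO'', hiff1, hiff2⟩ :=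
        Stmt2Proof.dir1 I w e S hWF hw he hwS I' hP hO
      exact ⟨hunc, I'', hP'', hO'', (hiff1 j).1 h1, fun hc => h2 ((hiff2 j).2 hc)⟩
    · rintro ⟨-, I'', hP'', hO'', h1, h2⟩
      obtain ⟨I', hP, hO, hiff1, hiff2⟩ :=
        Stmt2Proof.dir2 I w e S hWF hw he hwS I'' hP'' hO''
      exact ⟨he, I', hP, hO, (hiff1 j).2 h1, fun hc => h2 ((hiff2 j).1 hc)⟩
  · constructor
    · rintro ⟨-, I', hP, hO, h1, h2⟩
      obtain ⟨I'', hP'', hO'', hiff1, hiff2⟩ :=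
        Stmt2Proof.dir1 I w e S hWF hw he hwS I' hP hO
      exact ⟨hunc, I'', hP'', hO'', (hiff2 j).1 h1, fun hc => h2 ((hiff1 j).2 hc)⟩
    · rintro ⟨-, I'', hP'', hO'', h1, h2⟩
      obtain ⟨I', hP, hO, hiff1, hiff2⟩ :=
        Stmt2Proof.dir2 I w e S hWF hw he hwS I'' hP'' hO''
      exact ⟨he, I', hP, hO, (hiff2 j).2 h1, fun hc => h2 ((hiff1 j).1 hc)⟩
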